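/- arXiv:1401.3675 — 2 statements merged into one kernel-verified Lean document; each statement's English description precedes it below -/
import Mathlib

section
/- If an ordinal one-sided matching mechanism is strategyproof, then it is swap monotonic: for any agent i swapping two adjacent objects a_k ≻ a_{k+1} in its report (to a_{k+1} ≻ a_k), either the agent's allocation vector is completely unchanged, or its probability for a_k strictly decreases and its probability for a_{k+1} strictly increases. -/
open Finset

/-- A (strict) preference type over `m` objects: rank `k` maps to the `k`-th choice. -/
abbrev Pref (m : ℕ) := Fin m ≃ Fin m

/-- `a` is strictly preferred to `b` under type `t` (smaller rank). -/
def Prefers {m : ℕ} (t : Pref m) (a b : Fin m) : Prop := t.symm a < t.symm b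

/-- A vNM utility `u` is consistent with type `t`. -/
def Consistent {m : ℕ} (t : Pref m) (u : Fin m → ℝ) : Prop :=
  ∀ a b : Fin m, Prefers t a b ↔ u b < u a

/-- Swap the objects at ranks `k` and `k'` in the preference order. -/
def swapRanks {m : ℕ} (t : Pref m) (k k' : Fin m) : Pref m := (Equiv.swap k k').trans t

/-- Expected utility of allocation (probability vector) `p` under utility `u`. -/
def EU {m : ℕ} (u p : Fin m → ℝ) : ℝ := ∑ j, u j * p j

/-- The mechanism outputs valid allocation matrices: entries nonnegative, rows sum to one,
column sums respect capacities `q`. -/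
def ValidAlloc {n m : ℕ} (q : Fin m → ℕ) (f : (Fin n → Pref m) → Fin n → Fin m → ℝ) : Prop :=
  ∀ t : Fin n → Pref m,
    (∀ i j, 0 ≤ f t i j) ∧ (∀ i, ∑ j, f t i j = 1) ∧ (∀ j, ∑ i, f t i j ≤ (q j : ℝ))

/-- Strategyproofness: truth-telling maximizes expected utility for every consistent utility. -/
def Strategyproof {n m : ℕ} (f : (Fin n → Pref m) → Fin n → Fin m → ℝ) : Prop :=
  ∀ (i : Fin n) (t : Fin n → Pref m) (t' : Pref m) (u : Fin m → ℝ),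
    Consistent (t i) u → EU u (f (Function.update t i t') i) ≤ EU u (f t i)

/-- Upper invariance: an adjacent swap at ranks `k, k+1` leaves the allocation of every object
strictly preferred to the `k`-th choice unchanged. -/
def UpperInvariant {n m : ℕ} (f : (Fin n → Pref m) → Fin n → Fin m → ℝ) : Prop :=
  ∀ (i : Fin n) (t : Fin n → Pref m) (k : Fin m) (h : k.val + 1 < m) (j : Fin m),
    Prefers (t i) j ((t i) k) →
    f (Function.update t i (swapRanks (t i) k ⟨k.val + 1, h⟩)) i j = f t i j

/-- Lower invariance: an adjacent swap at ranks `k, k+1` leaves the allocation of every object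
ranked strictly below the `(k+1)`-st choice unchanged. -/
def LowerInvariant {n m : ℕ} (f : (Fin n → Pref m) → Fin n → Fin m → ℝ) : Prop :=
  ∀ (i : Fin n) (t : Fin n → Pref m) (k : Fin m) (h : k.val + 1 < m) (j : Fin m),
    Prefers (t i) ((t i) ⟨k.val + 1, h⟩) j →
    f (Function.update t i (swapRanks (t i) k ⟨k.val + 1, h⟩)) i j = f t i j

/-- Swap monotonicity: upon an adjacent swap `a_k ≻ a_{k+1}` to `a_{k+1} ≻ a_k`, either the
agent's allocation is unchanged, or its probability for `a_k` strictly decreases and its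
probability for `a_{k+1}` strictly increases. -/
def SwapMonotonic {n m : ℕ} (f : (Fin n → Pref m) → Fin n → Fin m → ℝ) : Prop :=
  ∀ (i : Fin n) (t : Fin n → Pref m) (k : Fin m) (h : k.val + 1 < m),
    (∀ j, f (Function.update t i (swapRanks (t i) k ⟨k.val + 1, h⟩)) i j = f t i j) ∨
    (f (Function.update t i (swapRanks (t i) k ⟨k.val + 1, h⟩)) i ((t i) k) < f t i ((t i) k) ∧
     f t i ((t i) ⟨k.val + 1, h⟩) <
       f (Function.update t i (swapRanks (t i) k ⟨k.val + 1, h⟩)) i ((t i) ⟨k.val + 1, h⟩))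

/-- Minimum value of a utility function. -/
noncomputable def umin {m : ℕ} (u : Fin m → ℝ) : ℝ := sInf (Set.range u)

/-- Uniformly relatively bounded indifference with bound `r`. -/
def URBI {m : ℕ} (r : ℝ) (u : Fin m → ℝ) : Prop :=
  ∀ a b : Fin m, u b < u a → u b - umin u ≤ r * (u a - umin u)

/-- `r`-partial strategyproofness: truth-telling is optimal for every consistent utility
satisfying `URBI r`. -/
def PartialSP {n m : ℕ} (r : ℝ) (f : (Fin n → Pref m) → Fin n → Fin m → ℝ) : Prop :=
  ∀ (i : Fin n) (t : Fin n → Pref m) (t' : Pref m) (u : Fin m → ℝ),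
    Consistent (t i) u → URBI r u →
    EU u (f (Function.update t i t') i) ≤ EU u (f t i)

/-- Cumulative probability of the weak upper contour set of `a` under type `t`. -/
def cumul {m : ℕ} (t : Pref m) (p : Fin m → ℝ) (a : Fin m) : ℝ :=
  ∑ b ∈ Finset.univ.filter (fun b => t.symm b ≤ t.symm a), p b

/-- `p` strictly first order-stochastically dominates `q` with respect to type `t`. -/
def StochDom {m : ℕ} (t : Pref m) (p q : Fin m → ℝ) : Prop :=
  (∀ a, cumul t q a ≤ cumul t p a) ∧ (∃ a, cumul t q a < cumul t p a)

/-!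
Testing strategyproofness with utilities that approximate the indicator of the top `ℓ + 1`
choices shows that truth-telling gives these choices at least as much probability as any misreport.
Applied to an adjacent swap at ranks `k, k + 1` and to its reversal, this forces the cumulative
probabilities of the two reports to agree at every rank except `k`. Hence the allocation can change
only at `a_k` and `a_{k+1}`, by the same amount `d ≥ 0` in opposite directions.
-/

open Filter Topology

section OrderedSums

variable {α : Type*} [LinearOrder α] [LocallyFiniteOrderBot α] [PredOrder α] {k : α}

lemma Finset.sum_Iio_eq_zero_of_not_covBy {M : Type*} [AddCommMonoid M] {g : α → M}
    (hg : ∀ ℓ ≠ k, ∑ s ∈ Iic ℓ, g s = 0) {r : α} (hr : ¬k ⋖ r) : ∑ s ∈ Iio r, g s = 0 := by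
  by_cases hmin : IsMin r
  · simp [hmin.finsetIio_eq]
  · rw [← Finset.Iic_pred_eq_Iio_of_not_isMin hmin]
    exact hg _ fun h => hr (h ▸ Order.pred_covBy_of_not_isMin hmin)

open Classical in
lemma apply_eq_of_forall_ne_sum_Iic_eq_zero {M : Type*} [AddCommGroup M] {g : α → M}
    (hg : ∀ ℓ ≠ k, ∑ s ∈ Iic ℓ, g s = 0) (r : α) :
    g r = (if r = k then ∑ s ∈ Iic k, g s else 0) - (if k ⋖ r then ∑ s ∈ Iic k, g s else 0) := by
  have hsplit : g r = ∑ s ∈ Iic r, g s - ∑ s ∈ Iio r, g s := by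
    rw [← Finset.Iio_insert, Finset.sum_insert Finset.notMem_Iio_self, add_sub_cancel_right]
  rw [hsplit]
  congr 1
  · split_ifs with hrk
    · rw [hrk]
    · exact hg r hrk
  · split_ifs with hkr
    · rw [← Finset.coe_inj.1 (by simpa using hkr.Iio_eq : (Iio r : Set α) = Iic k)]
    · exact Finset.sum_Iio_eq_zero_of_not_covBy hg hkr

end OrderedSums

lemma swap_le_iff_of_covBy {α : Type*} [LinearOrder α] {k k' ℓ : α} (hk : k ⋖ k') (hℓ : ℓ ≠ k)
    (r : α) : Equiv.swap k k' r ≤ ℓ ↔ r ≤ ℓ := by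
  have hkℓ : k ≤ ℓ ↔ k' ≤ ℓ :=
    ⟨fun h => hk.ge_of_gt (lt_of_le_of_ne h hℓ.symm), fun h => hk.lt.le.trans h⟩
  rcases eq_or_ne r k with rfl | hrk
  · rw [Equiv.swap_apply_left, hkℓ]
  rcases eq_or_ne r k' with rfl | hrk'
  · rw [Equiv.swap_apply_right, hkℓ]
  · rw [Equiv.swap_apply_of_ne_of_ne hrk hrk']

def massUpTo {m : ℕ} (t : Pref m) (ℓ : Fin m) (p : Fin m → ℝ) : ℝ :=
  ∑ r ∈ Iic ℓ, p (t r)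

lemma massUpTo_swapRanks {m : ℕ} (t : Pref m) {k k' ℓ : Fin m} (hk : k ⋖ k') (hℓ : ℓ ≠ k)
    (p : Fin m → ℝ) : massUpTo (swapRanks t k k') ℓ p = massUpTo t ℓ p :=
  Finset.sum_equiv (Equiv.swap k k') (by simp [swap_le_iff_of_covBy hk hℓ]) (fun _ _ => rfl)

lemma consistent_comp_symm {m : ℕ} (t : Pref m) {v : Fin m → ℝ} (hv : StrictAnti v) :
    Consistent t (v ∘ t.symm) :=
  fun _ _ => hv.lt_iff_gt.symm

lemma EU_comp_symm {m : ℕ} (t : Pref m) (v p : Fin m → ℝ) :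
    EU (v ∘ t.symm) p = ∑ r, v r * p (t r) := by
  rw [EU, ← t.sum_comp]
  simp

lemma massUpTo_le_of_forall_consistent {m : ℕ} {t : Pref m} {p p' : Fin m → ℝ}
    (h : ∀ u, Consistent t u → EU u p' ≤ EU u p) (ℓ : Fin m) :
    massUpTo t ℓ p' ≤ massUpTo t ℓ p := by
  -- Test with the utilities `1[rank ≤ ℓ] - ε * rank`, which are consistent with `t` for `ε > 0`
  -- and tend to the indicator of the top `ℓ + 1` choices.
  let v : ℝ → Fin m → ℝ := fun ε r => (if r ≤ ℓ then 1 else 0) - ε * r.val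
  have hEU : ∀ ε q, EU (v ε ∘ t.symm) q = massUpTo t ℓ q - ε * ∑ r, (r.val : ℝ) * q (t r) := by
    intro ε q
    simp only [EU_comp_symm, v, massUpTo, sub_mul, ite_mul, one_mul, zero_mul, sum_sub_distrib,
      sum_ite, sum_const_zero, add_zero, mul_sum, mul_assoc, filter_ge_eq_Iic]
  have hstrict : ∀ ε > 0, StrictAnti (v ε) := by
    intro ε hε
    refine Antitone.add_strictAnti (fun a b hab => ?_) (fun a b hab => ?_)
    · split_ifs with hb ha <;> grind
    · have : (a : ℝ) < b := by exact_mod_cast hab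
      simp only [neg_lt_neg_iff]; nlinarith
  have key : ∀ ε ∈ Set.Ioi (0 : ℝ), massUpTo t ℓ p' - ε * ∑ r, (r.val : ℝ) * p' (t r)
      ≤ massUpTo t ℓ p - ε * ∑ r, (r.val : ℝ) * p (t r) := fun ε hε => by
    simpa only [hEU] using h _ (consistent_comp_symm t (hstrict ε hε))
  have hlim : ∀ x c : ℝ, Tendsto (fun ε => x - ε * c) (𝓝[>] 0) (𝓝 x) := fun x c => by
    have : Continuous fun ε : ℝ => x - ε * c := by fun_prop
    simpa using (this.tendsto 0).mono_left nhdsWithin_le_nhds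
  exact le_of_tendsto_of_tendsto (hlim _ _) (hlim _ _) (eventually_nhdsWithin_of_forall key)

lemma Strategyproof.EU_le_of_consistent_update {n m : ℕ}
    {f : (Fin n → Pref m) → Fin n → Fin m → ℝ} (hsp : Strategyproof f) (i : Fin n)
    (t : Fin n → Pref m) {t' : Pref m} {u : Fin m → ℝ} (hu : Consistent t' u) :
    EU u (f t i) ≤ EU u (f (Function.update t i t') i) := by
  simpa using hsp i (Function.update t i t') (t i) u (by simpa using hu)

lemma eq_or_shift_of_massUpTo_eq_of_ne {m : ℕ} {t : Pref m} {p p' : Fin m → ℝ} {k k' : Fin m}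
    (hk : k ⋖ k') (hne : ∀ ℓ ≠ k, massUpTo t ℓ p' = massUpTo t ℓ p)
    (hle : massUpTo t k p' ≤ massUpTo t k p) :
    (∀ j, p' j = p j) ∨ (p' (t k) < p (t k) ∧ p (t k') < p' (t k')) := by
  let g : Fin m → ℝ := fun r => p (t r) - p' (t r)
  have hg : ∀ ℓ ≠ k, ∑ r ∈ Iic ℓ, g r = 0 := fun ℓ hℓ => by
    rw [sum_sub_distrib, ← massUpTo, ← massUpTo, hne ℓ hℓ, sub_self]
  have hd : ∑ r ∈ Iic k, g r = massUpTo t k p - massUpTo t k p' := sum_sub_distrib ..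
  have hgr := apply_eq_of_forall_ne_sum_Iic_eq_zero hg
  rcases (sub_nonneg.2 hle).eq_or_lt with hzero | hpos
  · left
    intro j
    obtain ⟨r, rfl⟩ := t.surjective j
    have := hgr r
    simp only [hd, ← hzero, ite_self, sub_zero, g] at this
    linarith
  · right
    have hgk := hgr k
    have hgk' := hgr k'
    simp only [g, hd, ↓reduceIte, covBy_irrefl, hk.ne', hk] at hgk hgk'
    constructor <;> linarith

theorem sp_implies_swapMonotonic_general {n m : ℕ}
    (f : (Fin n → Pref m) → Fin n → Fin m → ℝ)
    (hsp : Strategyproof f) : SwapMonotonic f := by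
  intro i t k h
  have hk : k ⋖ ⟨k.val + 1, h⟩ := Fin.covBy_iff.2 (Nat.covBy_iff_add_one_eq.2 rfl)
  have hdown := massUpTo_le_of_forall_consistent (hsp i t (swapRanks (t i) k ⟨k.val + 1, h⟩))
  have hup := massUpTo_le_of_forall_consistent fun _ =>
    hsp.EU_le_of_consistent_update i t (t' := swapRanks (t i) k ⟨k.val + 1, h⟩)
  refine eq_or_shift_of_massUpTo_eq_of_ne hk (fun ℓ hℓ => le_antisymm (hdown ℓ) ?_) (hdown k)
  simpa only [massUpTo_swapRanks _ hk hℓ] using hup ℓ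

/-- strategyproofness implies swap monotonicity. -/
theorem sp_implies_swapMonotonic {n m : ℕ} (q : Fin m → ℕ) (hq : n ≤ ∑ j, q j)
    (f : (Fin n → Pref m) → Fin n → Fin m → ℝ) (hf : ValidAlloc q f)
    (hsp : Strategyproof f) : SwapMonotonic f :=
  sp_implies_swapMonotonic_general f hsp
end

section
/- If a mechanism f is swap monotonic and upper invariant, then there exists r ∈ (0,1] such that f is r-partially strategyproof. -/
open Finset

/-!
Since there are finitely many type profiles, swap monotonicity comes with a uniform lower
bound `r > 0` on every strict drop it produces. A misreport is brought back to the truthful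
order `σ` by adjacent swaps, each lifting the `σ`-best misplaced object `σ L` by one rank and
removing one inversion. By upper invariance such a swap only changes the probabilities of
objects ranked below `σ L`, which `σ` ranks below `σ L` as well; under `URBI r` each of them is
worth at most `r` times `σ L` (measured from `umin u`), so the probability at least `r` that
`σ L` gains outweighs whatever the others lose.
-/

theorem exists_pos_le_of_pos_of_finite {X : Type*} [Finite X] (g : X → ℝ) :
    ∃ r : ℝ, 0 < r ∧ r ≤ 1 ∧ ∀ x, 0 < g x → r ≤ g x := by
  have := Fintype.ofFinite X
  by_cases hpos : ∃ x, 0 < g x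
  · obtain ⟨x₀, hx₀, hmin⟩ := ((univ : Finset X).filter fun x => 0 < g x).exists_min_image g
      (by simpa [Finset.Nonempty] using hpos)
    rw [mem_filter] at hx₀
    exact ⟨min 1 (g x₀), lt_min one_pos hx₀.2, min_le_left _ _, fun x hx =>
      (min_le_right _ _).trans (hmin x (mem_filter.2 ⟨mem_univ x, hx⟩))⟩
  · exact ⟨1, one_pos, le_rfl, fun x hx => absurd ⟨x, hx⟩ hpos⟩

theorem sum_mul_le_sum_mul_of_drop {ι : Type*} [Fintype ι] [DecidableEq ι]
    (v P P' : ι → ℝ) (b : ι) {r : ℝ} (hr : 0 ≤ r) (hv : ∀ j, 0 ≤ v j)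
    (hP : ∀ j, 0 ≤ P j) (hP' : ∀ j, 0 ≤ P' j) (hP'sum : ∑ j, P' j = 1)
    (hchanged : ∀ j, j ≠ b → P' j ≠ P j → v j ≤ r * v b) (hdrop : r ≤ P b - P' b) :
    ∑ j, P' j * v j ≤ ∑ j, P j * v j := by
  have hrv : 0 ≤ r * v b := mul_nonneg hr (hv b)
  have hgain : ∀ j ∈ univ.erase b, P' j * v j - P j * v j ≤ P' j * (r * v b) := by
    intro j hj
    by_cases he : P' j = P j
    · rw [he, sub_self]
      exact mul_nonneg (hP j) hrv
    · have hvj := hchanged j (ne_of_mem_erase hj) he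
      rcases le_or_gt (P' j) (P j) with hc | hc
      · nlinarith [hv j, hP' j]
      · nlinarith [hP j]
  have hrest : ∑ j ∈ univ.erase b, P' j * v j - ∑ j ∈ univ.erase b, P j * v j
      ≤ (1 - P' b) * (r * v b) := by
    rw [← hP'sum, ← sum_erase_eq_sub (mem_univ b), ← sum_sub_distrib, sum_mul]
    exact sum_le_sum hgain
  rw [← add_sum_erase _ _ (mem_univ b), ← add_sum_erase _ _ (mem_univ b)]
  nlinarith [hP' b, hv b]

section Pref

variable {m : ℕ}

theorem swapRanks_apply (t : Pref m) (k k' x : Fin m) :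
    swapRanks t k k' x = t (Equiv.swap k k' x) := rfl

theorem swapRanks_symm_apply (t : Pref m) (k k' x : Fin m) :
    (swapRanks t k k').symm x = Equiv.swap k k' (t.symm x) := by
  simp [swapRanks]

theorem swapRanks_swapRanks (t : Pref m) (k k' : Fin m) :
    swapRanks (swapRanks t k k') k k' = t :=
  Equiv.ext fun x => by simp [swapRanks_apply]

theorem Prefers.asymm {t : Pref m} {a b : Fin m} (h : Prefers t a b) : ¬Prefers t b a :=
  lt_asymm h

theorem prefers_or_prefers {t : Pref m} {a b : Fin m} (h : a ≠ b) :
    Prefers t a b ∨ Prefers t b a :=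
  lt_or_gt_of_ne (t.symm.injective.ne h)

theorem prefers_swapRanks_iff (t : Pref m) (k : Fin m) (hk : k.val + 1 < m) {x y : Fin m}
    (hxy : (x, y) ≠ (t k, t ⟨k.val + 1, hk⟩)) (hyx : (x, y) ≠ (t ⟨k.val + 1, hk⟩, t k)) :
    Prefers (swapRanks t k ⟨k.val + 1, hk⟩) x y ↔ Prefers t x y := by
  obtain ⟨p, rfl⟩ := t.surjective x
  obtain ⟨q, rfl⟩ := t.surjective y
  simp only [ne_eq, Prod.mk.injEq, t.injective.eq_iff] at hxy hyx
  simp only [Prefers, swapRanks_symm_apply, Equiv.symm_apply_apply, Equiv.swap_apply_def]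
  split_ifs <;> simp only [Fin.ext_iff, Fin.lt_def] at * <;> omega

instance Prefers.decidable (t : Pref m) (a b : Fin m) : Decidable (Prefers t a b) :=
  inferInstanceAs (Decidable (t.symm a < t.symm b))

theorem prefers_apply_succ (t : Pref m) (k : Fin m) (hk : k.val + 1 < m) :
    Prefers t (t k) (t ⟨k.val + 1, hk⟩) := by
  simp [Prefers, Fin.lt_def]

theorem prefers_swapRanks_apply_succ (t : Pref m) (k : Fin m) (hk : k.val + 1 < m) :
    Prefers (swapRanks t k ⟨k.val + 1, hk⟩) (t ⟨k.val + 1, hk⟩) (t k) := by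
  simpa [swapRanks_apply] using prefers_apply_succ (swapRanks t k ⟨k.val + 1, hk⟩) k hk

def inversions (σ τ : Pref m) : Finset (Fin m × Fin m) :=
  univ.filter fun x => Prefers σ x.1 x.2 ∧ Prefers τ x.2 x.1

theorem card_inversions_swapRanks_lt (σ τ : Pref m) (k : Fin m) (hk : k.val + 1 < m)
    (hdesc : Prefers σ (τ ⟨k.val + 1, hk⟩) (τ k)) :
    (inversions σ (swapRanks τ k ⟨k.val + 1, hk⟩)).card < (inversions σ τ).card := by
  refine card_lt_card ((ssubset_iff_of_subset ?_).2 ⟨(τ ⟨k.val + 1, hk⟩, τ k), ?_, ?_⟩)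
  · rintro ⟨x, y⟩ h
    simp only [inversions, mem_filter, mem_univ, true_and] at h ⊢
    refine ⟨h.1, (prefers_swapRanks_iff τ k hk ?_ ?_).1 h.2⟩
    · rintro ⟨⟩
      exact (prefers_swapRanks_apply_succ τ k hk).asymm h.2
    · rintro ⟨⟩
      exact hdesc.asymm h.1
  · simpa [inversions] using ⟨hdesc, prefers_apply_succ τ k hk⟩
  · simpa [inversions] using fun _ => (prefers_swapRanks_apply_succ τ k hk).asymm

theorem swapRanks_toward_of_agree (σ τ : Pref m) (L k : Fin m) (hk : k.val + 1 < m)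
    (hagree : ∀ j, σ.symm j < L → τ.symm j = σ.symm j)
    (hpos : τ.symm (σ L) = ⟨k.val + 1, hk⟩) (hLk : L ≤ k) :
    Prefers σ (σ L) (τ k) ∧
      ∀ j, Prefers (swapRanks τ k ⟨k.val + 1, hk⟩) (σ L) j → Prefers σ (σ L) j := by
  have hpos' : σ L = τ ⟨k.val + 1, hk⟩ := by rw [← hpos, Equiv.apply_symm_apply]
  simp only [Prefers, Equiv.symm_apply_apply]
  constructor
  · by_contra! hle
    rcases hle.lt_or_eq with hlt | heq
    · have := hagree (τ k) hlt
      rw [Equiv.symm_apply_apply] at this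
      exact absurd hLk (not_le.2 (this ▸ hlt))
    · have : τ k = τ ⟨k.val + 1, hk⟩ := by rw [← hpos', ← heq, Equiv.apply_symm_apply]
      simpa [Fin.ext_iff] using τ.injective this
  · intro j hj
    by_contra! hle
    rcases hle.lt_or_eq with hlt | heq
    · rw [swapRanks_symm_apply, swapRanks_symm_apply, hpos, hagree j hlt,
        Equiv.swap_apply_right, Equiv.swap_apply_of_ne_of_ne] at hj
      · exact absurd hLk (not_le.2 (hj.trans hlt))
      · exact (hlt.trans_le hLk).ne
      · exact (hlt.trans_le (hLk.trans (Fin.le_def.2 (Nat.le_succ _)))).ne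
    · rw [← heq, Equiv.apply_symm_apply] at hj
      exact lt_irrefl _ hj

theorem exists_swapRanks_toward (σ τ : Pref m) (hne : τ ≠ σ) :
    ∃ (k : Fin m) (hk : k.val + 1 < m), Prefers σ (τ ⟨k.val + 1, hk⟩) (τ k) ∧
      ∀ j, Prefers (swapRanks τ k ⟨k.val + 1, hk⟩) (τ ⟨k.val + 1, hk⟩) j →
        Prefers σ (τ ⟨k.val + 1, hk⟩) j := by
  obtain ⟨ℓ, hℓ⟩ : ∃ ℓ, τ ℓ ≠ σ ℓ := not_forall.1 fun h => hne (Equiv.ext h)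
  obtain ⟨L, hL, hmin⟩ := wellFounded_lt.has_min {ℓ | τ ℓ ≠ σ ℓ} ⟨ℓ, hℓ⟩
  have hagree_pos : ∀ ℓ < L, τ ℓ = σ ℓ := fun ℓ hℓ => not_not.1 fun h => hmin ℓ h hℓ
  have hagree : ∀ j, σ.symm j < L → τ.symm j = σ.symm j := fun j hj => by
    rw [Equiv.symm_apply_eq, hagree_pos _ hj, Equiv.apply_symm_apply]
  obtain ⟨p, hp⟩ : ∃ p, τ.symm (σ L) = p := ⟨_, rfl⟩
  have hLp : L < p := by
    rcases lt_trichotomy p L with hlt | heq | hgt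
    · have : σ p = σ L := by rw [← hagree_pos p hlt, ← hp, Equiv.apply_symm_apply]
      exact absurd (σ.injective this ▸ hlt) (lt_irrefl _)
    · rw [heq, Equiv.symm_apply_eq] at hp
      exact absurd hp.symm hL
    · exact hgt
  rw [Fin.lt_def] at hLp
  have hk : p.val - 1 + 1 < m := by omega
  have hpk : τ.symm (σ L) = ⟨p.val - 1 + 1, hk⟩ := by rw [hp]; ext; simp; omega
  have hσL : τ ⟨p.val - 1 + 1, hk⟩ = σ L := by rw [← hpk, Equiv.apply_symm_apply]
  refine ⟨⟨p.val - 1, by omega⟩, hk, ?_⟩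
  rw [hσL]
  exact swapRanks_toward_of_agree σ τ L _ hk hagree hpk (Fin.le_def.2 (by simp; omega))

end Pref

theorem EU_eq_sum_mul_sub_add {m : ℕ} (u P : Fin m → ℝ) (c : ℝ) (hP : ∑ j, P j = 1) :
    EU u P = ∑ j, P j * (u j - c) + c := by
  simp only [EU, mul_sub, sum_sub_distrib, ← sum_mul, hP]
  simp [mul_comm]

theorem EU_le_EU_of_drop {m : ℕ} (u P P' : Fin m → ℝ) (b : Fin m) (c : ℝ) {r : ℝ}
    (hr : 0 ≤ r) (hc : ∀ j, c ≤ u j) (hP : ∀ j, 0 ≤ P j) (hP' : ∀ j, 0 ≤ P' j)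
    (hPsum : ∑ j, P j = 1) (hP'sum : ∑ j, P' j = 1)
    (hchanged : ∀ j, j ≠ b → P' j ≠ P j → u j - c ≤ r * (u b - c)) (hdrop : r ≤ P b - P' b) :
    EU u P' ≤ EU u P := by
  rw [EU_eq_sum_mul_sub_add u P c hPsum, EU_eq_sum_mul_sub_add u P' c hP'sum, add_le_add_iff_right]
  exact sum_mul_le_sum_mul_of_drop (fun j => u j - c) P P' b hr (fun j => sub_nonneg.2 (hc j))
    hP hP' hP'sum hchanged hdrop

theorem umin_le {m : ℕ} (u : Fin m → ℝ) (j : Fin m) : umin u ≤ u j :=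
  csInf_le (Set.finite_range u).bddBelow ⟨j, rfl⟩

def SwapMonotonicBy {n m : ℕ} (r : ℝ) (f : (Fin n → Pref m) → Fin n → Fin m → ℝ) : Prop :=
  ∀ (i : Fin n) (t : Fin n → Pref m) (k : Fin m) (h : k.val + 1 < m),
    (∀ j, f (Function.update t i (swapRanks (t i) k ⟨k.val + 1, h⟩)) i j = f t i j) ∨
    r ≤ f t i ((t i) k) - f (Function.update t i (swapRanks (t i) k ⟨k.val + 1, h⟩)) i ((t i) k)

section Mechanism

variable {n m : ℕ} {f : (Fin n → Pref m) → Fin n → Fin m → ℝ}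

theorem SwapMonotonic.exists_swapMonotonicBy (hsm : SwapMonotonic f) :
    ∃ r : ℝ, 0 < r ∧ r ≤ 1 ∧ SwapMonotonicBy r f := by
  let drop : Fin n × (Fin n → Pref m) × Fin m → ℝ := fun ⟨i, t, k⟩ =>
    if h : k.val + 1 < m then
      f t i ((t i) k) - f (Function.update t i (swapRanks (t i) k ⟨k.val + 1, h⟩)) i ((t i) k)
    else 0
  obtain ⟨r, hr0, hr1, hr⟩ := exists_pos_le_of_pos_of_finite drop
  refine ⟨r, hr0, hr1, fun i t k h => (hsm i t k h).imp_right fun hlt => ?_⟩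
  simpa [drop, h] using hr (i, t, k) (by simpa [drop, h] using hlt.1)

theorem EU_swapRanks_le (hnonneg : ∀ t i j, 0 ≤ f t i j) (hsum : ∀ t i, ∑ j, f t i j = 1)
    {r : ℝ} (hr : 0 ≤ r) (hmargin : SwapMonotonicBy r f) (hui : UpperInvariant f)
    {σ : Pref m} {u : Fin m → ℝ} (hu : Consistent σ u) (hurbi : URBI r u)
    (t : Fin n → Pref m) (i : Fin n) (k : Fin m) (hk : k.val + 1 < m)
    (htop : ∀ j, Prefers (t i) (t i k) j → Prefers σ (t i k) j) :
    EU u (f (Function.update t i (swapRanks (t i) k ⟨k.val + 1, hk⟩)) i) ≤ EU u (f t i) := by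
  rcases hmargin i t k hk with hsame | hdrop
  · simp only [EU, hsame, le_refl]
  refine EU_le_EU_of_drop u _ _ (t i k) (umin u) hr (umin_le u) (hnonneg _ i) (hnonneg _ i)
    (hsum _ i) (hsum _ i) (fun j hj hne => ?_) hdrop
  have hbelow : Prefers (t i) (t i k) j :=
    (prefers_or_prefers hj).resolve_left fun habove => hne (hui i t k hk j habove)
  exact hurbi (t i k) j ((hu _ _).1 (htop j hbelow))

theorem EU_update_le (hnonneg : ∀ t i j, 0 ≤ f t i j) (hsum : ∀ t i, ∑ j, f t i j = 1)
    {r : ℝ} (hr : 0 ≤ r) (hmargin : SwapMonotonicBy r f) (hui : UpperInvariant f)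
    (t : Fin n → Pref m) (i : Fin n) {u : Fin m → ℝ} (hu : Consistent (t i) u)
    (hurbi : URBI r u) (τ : Pref m) :
    EU u (f (Function.update t i τ) i) ≤ EU u (f t i) := by
  induction hN : (inversions (t i) τ).card using Nat.strong_induction_on generalizing τ with
  | _ N ih =>
  by_cases hτ : τ = t i
  · rw [hτ, Function.update_eq_self]
  obtain ⟨k, hk, hdesc, htop⟩ := exists_swapRanks_toward (t i) τ hτ
  have hstep := EU_swapRanks_le hnonneg hsum hr hmargin hui hu hurbi
    (Function.update t i (swapRanks τ k ⟨k.val + 1, hk⟩)) i k hk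
    (by simpa only [Function.update_self, swapRanks_apply, Equiv.swap_apply_left] using htop)
  rw [Function.update_self, swapRanks_swapRanks, Function.update_idem] at hstep
  exact hstep.trans (ih _ (hN ▸ card_inversions_swapRanks_lt _ _ k hk hdesc) _ rfl)

end Mechanism

theorem swapMono_upperInv_implies_psp_general {n m : ℕ} (q : Fin m → ℕ)
    (f : (Fin n → Pref m) → Fin n → Fin m → ℝ) (hf : ValidAlloc q f)
    (hsm : SwapMonotonic f) (hui : UpperInvariant f) :
    ∃ r : ℝ, 0 < r ∧ r ≤ 1 ∧ PartialSP r f := by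
  obtain ⟨r, hr0, hr1, hmargin⟩ := hsm.exists_swapMonotonicBy
  exact ⟨r, hr0, hr1, fun i t t' u hu hurbi =>
    EU_update_le (fun t => (hf t).1) (fun t => (hf t).2.1) hr0.le hmargin hui t i hu hurbi t'⟩

/-- swap monotonicity and upper invariance imply r-partial strategyproofness
for some r ∈ (0,1]. -/
theorem swapMono_upperInv_implies_psp {n m : ℕ} (q : Fin m → ℕ) (hq : n ≤ ∑ j, q j)
    (f : (Fin n → Pref m) → Fin n → Fin m → ℝ) (hf : ValidAlloc q f)
    (hsm : SwapMonotonic f) (hui : UpperInvariant f) :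
    ∃ r : ℝ, 0 < r ∧ r ≤ 1 ∧ PartialSP r f :=
  swapMono_upperInv_implies_psp_general q f hf hsm hui
end
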